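/- arXiv:1901.03142 — 3 statements merged into one kernel-verified Lean document; each statement's English description precedes it below -/
import Mathlib

section
/- Let $F$ be a finite field with subfield $B$, $[F:B]=t\geq 2$, and $\alpha_1,\alpha_2,\alpha_3\in F$ pairwise distinct. Then $\dim_B K_{1,2,3}=t-1$ if and only if $\frac{\alpha_i-\alpha_j}{\alpha_{i'}-\alpha_{j'}}\in B\setminus\{0\}$ for all $i,j,i',j'\in\{1,2,3\}$ with $i\neq j$ and $i'\neq j'$. -/
open Module

/-- `dim_B K_{1,2,3} = t - 1` iff all ratios `(αᵢ-αⱼ)/(αᵢ'-αⱼ')` (for `i≠j`,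
`i'≠j'`) are nonzero elements of `B`. -/
theorem stmt_6 (B F : Type*) [Field B] [Field F] [Algebra B F] [Finite F]
    [FiniteDimensional B F] (t : ℕ) (ht : Module.finrank B F = t) (h2 : 2 ≤ t)
    (α : Fin 3 → F) (hα : Function.Injective α)
    (K123 : Submodule B F)
    (hK : (K123 : Set F) = {x : F |
      Algebra.trace B F (α 0 * x) = Algebra.trace B F (α 1 * x) ∧
      Algebra.trace B F (α 1 * x) = Algebra.trace B F (α 2 * x)}) :
    Module.finrank B K123 = t - 1 ↔
      ∀ i j i' j' : Fin 3, i ≠ j → i' ≠ j' →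
        ∃ b : B, b ≠ 0 ∧ algebraMap B F b = (α i - α j) / (α i' - α j') := by
  classical
  have hBfin : Finite B := Finite.of_injective _ (algebraMap B F).injective
  have hsep : Algebra.IsSeparable B F := inferInstance
  set T := Algebra.traceForm B F with hT
  have hnd : T.Nondegenerate := traceForm_nondegenerate B F
  set β := α 0 - α 1 with hβdef
  set γ := α 1 - α 2 with hγdef
  have hβ : β ≠ 0 := sub_ne_zero.2 fun h => (by decide : (0 : Fin 3) ≠ 1) (hα h)
  have hγ : γ ≠ 0 := sub_ne_zero.2 fun h => (by decide : (1 : Fin 3) ≠ 2) (hα h)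
  have hβγ : β + γ ≠ 0 := by
    have : α 0 - α 2 ≠ 0 := sub_ne_zero.2 fun h => (by decide : (0 : Fin 3) ≠ 2) (hα h)
    simpa [hβdef, hγdef, sub_add_sub_cancel] using this
  -- surjectivity of nonzero trace functionals
  have hsurj : ∀ z : F, z ≠ 0 → Function.Surjective (T z) := by
    intro z hz
    obtain ⟨y, hy⟩ : ∃ y, T z y ≠ 0 := by
      by_contra h; push_neg at h; exact hz (hnd.1 z h)
    intro b
    refine ⟨(b / T z y) • y, ?_⟩
    rw [map_smul, smul_eq_mul, div_mul_cancel₀ _ hy]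
  have hker : ∀ z : F, z ≠ 0 → finrank B (LinearMap.ker (T z)) = t - 1 := by
    intro z hz
    have h1 : finrank B (LinearMap.range (T z)) = 1 := by
      rw [LinearMap.range_eq_top.2 (hsurj z hz), finrank_top, Module.finrank_self]
    have h2' := LinearMap.finrank_range_add_finrank_ker (T z)
    rw [h1, ht] at h2'
    omega
  -- K123 is the intersection of the two kernels
  have hKker : K123 = LinearMap.ker (T β) ⊓ LinearMap.ker (T γ) := by
    ext x
    have hx : x ∈ K123 ↔ Algebra.trace B F (α 0 * x) = Algebra.trace B F (α 1 * x) ∧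
        Algebra.trace B F (α 1 * x) = Algebra.trace B F (α 2 * x) := by
      constructor
      · intro h
        have : x ∈ (K123 : Set F) := h
        rwa [hK] at this
      · intro h
        show x ∈ (K123 : Set F)
        rw [hK]; exact h
    have e1 : T β x = Algebra.trace B F (α 0 * x) - Algebra.trace B F (α 1 * x) := by
      simp [hT, Algebra.traceForm_apply, hβdef, sub_mul]
    have e2 : T γ x = Algebra.trace B F (α 1 * x) - Algebra.trace B F (α 2 * x) := by
      simp [hT, Algebra.traceForm_apply, hγdef, sub_mul]
    simp only [Submodule.mem_inf, LinearMap.mem_ker, hx, e1, e2, sub_eq_zero]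
  -- the key equivalence
  have key : finrank B K123 = t - 1 ↔ ∃ c : B, c ≠ 0 ∧ algebraMap B F c * β = γ := by
    constructor
    · intro hdim
      have hle1 : K123 ≤ LinearMap.ker (T β) := hKker ▸ inf_le_left
      have hle2 : K123 ≤ LinearMap.ker (T γ) := hKker ▸ inf_le_right
      have heq1 : K123 = LinearMap.ker (T β) :=
        Submodule.eq_of_le_of_finrank_eq hle1 (by rw [hdim, hker β hβ])
      have heq2 : K123 = LinearMap.ker (T γ) :=
        Submodule.eq_of_le_of_finrank_eq hle2 (by rw [hdim, hker γ hγ])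
      have hkk : LinearMap.ker (T β) = LinearMap.ker (T γ) := heq1 ▸ heq2
      obtain ⟨x, hx⟩ := hsurj β hβ 1
      refine ⟨T γ x, ?_, ?_⟩
      · intro h0
        -- then T γ = 0 on everything, contradiction
        have hall : ∀ y, T γ y = 0 := by
          intro y
          have hmem : y - (T β y) • x ∈ LinearMap.ker (T β) := by
            simp [LinearMap.mem_ker, map_sub, map_smul, hx, smul_eq_mul]
          rw [hkk] at hmem
          have := (LinearMap.mem_ker).1 hmem
          rw [map_sub, map_smul, smul_eq_mul, sub_eq_zero] at this
          rw [this, h0, mul_zero]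
        exact hγ (hnd.1 γ hall)
      · -- γ = c • β by nondegeneracy
        have hall : ∀ y, T (algebraMap B F (T γ x) * β - γ) y = 0 := by
          intro y
          have hmem : y - (T β y) • x ∈ LinearMap.ker (T β) := by
            simp [LinearMap.mem_ker, map_sub, map_smul, hx, smul_eq_mul]
          rw [hkk] at hmem
          have h1 := (LinearMap.mem_ker).1 hmem
          rw [map_sub, map_smul, smul_eq_mul, sub_eq_zero] at h1
          have e : T (algebraMap B F (T γ x) * β) y = T γ x * T β y := by
            simp only [hT, Algebra.traceForm_apply]
            rw [mul_assoc, ← Algebra.smul_def, map_smul, smul_eq_mul]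
          rw [map_sub, LinearMap.sub_apply, e, h1, mul_comm, sub_self]
        have := hnd.1 _ hall
        rwa [sub_eq_zero] at this
    · rintro ⟨c, hc, hcβ⟩
      have hkk : LinearMap.ker (T β) = LinearMap.ker (T γ) := by
        ext y
        have e : T γ y = c * T β y := by
          simp only [hT, Algebra.traceForm_apply]
          rw [← hcβ, mul_assoc, ← Algebra.smul_def, map_smul, smul_eq_mul]
        simp only [LinearMap.mem_ker, e]
        constructor
        · intro h; rw [h, mul_zero]
        · intro h
          rcases mul_eq_zero.1 h with h' | h'
          · exact absurd h' hc
          · exact h'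
      rw [hKker, hkk, inf_idem, hker γ hγ]
  rw [key]
  constructor
  · rintro ⟨c, hc, hcβ⟩ i j i' j' hij hij'
    -- 1 + c ≠ 0
    have h1c : (1 : B) + c ≠ 0 := by
      intro h
      apply hβγ
      have : β + γ = algebraMap B F (1 + c) * β := by rw [map_add, map_one, add_mul, one_mul, hcβ]
      rw [this, h, map_zero, zero_mul]
    have hd : ∀ i j : Fin 3, i ≠ j → ∃ d : B, d ≠ 0 ∧ α i - α j = algebraMap B F d * β := by
      intro i j hij
      fin_cases i <;> fin_cases j
      · exact absurd rfl hij
      · exact ⟨1, one_ne_zero, by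
          show α 0 - α 1 = algebraMap B F 1 * β
          rw [map_one, one_mul, hβdef]⟩
      · exact ⟨1 + c, h1c, by
          show α 0 - α 2 = algebraMap B F (1 + c) * β
          rw [map_add, map_one, add_mul, one_mul, hcβ, hβdef, hγdef]; ring⟩
      · exact ⟨-1, neg_ne_zero.2 one_ne_zero, by
          show α 1 - α 0 = algebraMap B F (-1) * β
          rw [map_neg, map_one, neg_one_mul, hβdef]; ring⟩
      · exact absurd rfl hij
      · exact ⟨c, hc, by
          show α 1 - α 2 = algebraMap B F c * β
          rw [hcβ, hγdef]⟩
      · exact ⟨-(1 + c), neg_ne_zero.2 h1c, by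
          show α 2 - α 0 = algebraMap B F (-(1 + c)) * β
          rw [map_neg, neg_mul, map_add, map_one, add_mul, one_mul, hcβ, hβdef, hγdef]; ring⟩
      · exact ⟨-c, neg_ne_zero.2 hc, by
          show α 2 - α 1 = algebraMap B F (-c) * β
          rw [map_neg, neg_mul, hcβ, hγdef]; ring⟩
      · exact absurd rfl hij
    obtain ⟨d, hd0, hdeq⟩ := hd i j hij
    obtain ⟨d', hd'0, hd'eq⟩ := hd i' j' hij'
    refine ⟨d / d', div_ne_zero hd0 hd'0, ?_⟩
    rw [map_div₀, hdeq, hd'eq, mul_div_mul_right _ _ hβ]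
  · intro h
    obtain ⟨b, hb, hbeq⟩ := h 1 2 0 1 (by decide) (by decide)
    refine ⟨b, hb, ?_⟩
    rw [hbeq]
    exact div_mul_cancel₀ _ hβ
end

section
/- Let $F$ be a finite field with subfield $B$, $\alpha_1,\alpha_2\in F$ distinct, $u\in K_{1,2}=\{x:\mathrm{Tr}_{F/B}((\alpha_1-\alpha_2)x)=0\}$ with $u\neq 0$, and $p(x)=\mathrm{Tr}_{F/B}(u(x-\alpha_1))/(x-\alpha_1)$ (as a polynomial). Then $p(\alpha_1)=u$ and $p(\alpha_2)=0$. -/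
open Polynomial

lemma trace_pow_sum_aux (B F : Type*) [Field B] [Field F] [Algebra B F] [Fintype B] [Finite F]
    [FiniteDimensional B F] (y : F) :
    algebraMap B F (Algebra.trace B F y) =
      ∑ i ∈ Finset.range (Module.finrank B F), y ^ Fintype.card B ^ i := by
  cases nonempty_fintype F
  set q := Fintype.card B with hq
  set t := Module.finrank B F with htt
  -- characteristic
  obtain ⟨p, hcp⟩ := CharP.exists B
  haveI : CharP B p := hcp
  obtain ⟨n, hp, hcardB⟩ := FiniteField.card B p
  haveI : Fact p.Prime := ⟨hp⟩
  haveI : CharP F p := charP_of_injective_algebraMap (algebraMap B F).injective p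
  haveI : ExpChar F p := .prime hp
  -- the Frobenius as a B-algebra automorphism
  let φHom : F →ₐ[B] F :=
    { toRingHom := iterateFrobenius F p n
      commutes' := fun b => by
        show iterateFrobenius F p n (algebraMap B F b) = algebraMap B F b
        rw [iterateFrobenius_def, ← map_pow, ← hcardB, FiniteField.pow_card] }
  have hbij : Function.Bijective φHom :=
    Finite.injective_iff_bijective.mp φHom.toRingHom.injective
  let φ : F ≃ₐ[B] F := AlgEquiv.ofBijective φHom hbij
  have hφ : ∀ x : F, φ x = x ^ q := fun x => by
    show φHom x = x ^ q
    simp [φHom, iterateFrobenius_def, ← hcardB]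
    rfl
  have hpow : ∀ (i : ℕ) (x : F), (φ ^ i) x = x ^ q ^ i := by
    intro i
    induction i with
    | zero => simp
    | succ i ih =>
      intro x
      rw [pow_succ', AlgEquiv.mul_apply, hφ, ih, ← pow_mul, ← pow_succ]
  have hq1 : 1 < q := Fintype.one_lt_card
  have hto : t ≤ orderOf φ := by
    by_contra hlt
    push_neg at hlt
    set d := orderOf φ with hd
    have hd0 : 0 < d := orderOf_pos φ
    have hone : ∀ x : F, x ^ q ^ d = x := by
      intro x
      have := congrArg (fun e : F ≃ₐ[B] F => e x) (pow_orderOf_eq_one φ)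
      simpa [-pow_orderOf_eq_one, hpow] using this
    have hzero : (X ^ q ^ d - X : F[X]) = 0 := by
      apply Polynomial.eq_zero_of_natDegree_lt_card_of_eval_eq_zero' _ Finset.univ
      · intro x _; simp [hone x]
      · have : (X ^ q ^ d - X : F[X]).natDegree = q ^ d := by
          rw [Polynomial.natDegree_sub_eq_left_of_natDegree_lt] <;>
            simp [Polynomial.natDegree_X_pow, Polynomial.natDegree_X]
          exact Nat.one_lt_pow hd0.ne' hq1
        rw [this, Finset.card_univ, Module.card_eq_pow_finrank (K := B) (V := F)]
        exact Nat.pow_lt_pow_right hq1 hlt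
    have : (X ^ q ^ d - X : F[X]).natDegree = q ^ d := by
      rw [Polynomial.natDegree_sub_eq_left_of_natDegree_lt] <;>
        simp [Polynomial.natDegree_X_pow, Polynomial.natDegree_X]
      exact Nat.one_lt_pow hd0.ne' hq1
    rw [hzero] at this
    simp only [Polynomial.natDegree_zero] at this
    have := pow_pos (show 0 < q by omega) d
    omega
  -- the map i ↦ φ ^ i is a bijection Fin t → Gal
  have hinj : Function.Injective (fun i : Fin t => φ ^ (i : ℕ)) := by
    intro i j hij
    have := pow_injOn_Iio_orderOf (x := φ) (lt_of_lt_of_le i.2 hto) (lt_of_lt_of_le j.2 hto) hij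
    exact Fin.ext this
  have hbij2 : Function.Bijective (fun i : Fin t => φ ^ (i : ℕ)) := by
    rw [Fintype.bijective_iff_injective_and_card]
    exact ⟨hinj, by rw [Fintype.card_fin, ← Nat.card_eq_fintype_card, IsGalois.card_aut_eq_finrank]⟩
  rw [trace_eq_sum_automorphisms]
  rw [← Fintype.sum_bijective _ hbij2 _ _ (fun i => rfl)]
  rw [← Fin.sum_univ_eq_sum_range (fun i => y ^ q ^ i) t]
  exact Finset.sum_congr rfl fun i _ => hpow i y

/-- For distinct `α₁, α₂` and nonzero `u ∈ K_{1,2}`, the polynomial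
`p(x) = Tr(u(x-α₁))/(x-α₁)` satisfies `p(α₁) = u` and `p(α₂) = 0`. -/
theorem stmt_12 (B F : Type*) [Field B] [Field F] [Algebra B F] [Fintype B] [Finite F]
    [FiniteDimensional B F] (t : ℕ) (ht : Module.finrank B F = t)
    (α₁ α₂ : F) (hα : α₁ ≠ α₂)
    (u : F) (hu0 : u ≠ 0) (hu : Algebra.trace B F ((α₁ - α₂) * u) = 0)
    (N p : F[X])
    (hN : N = ∑ i ∈ Finset.range t, (C u * (X - C α₁)) ^ (Fintype.card B ^ i))
    (hp : p = N /ₘ (X - C α₁)) :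
    p.eval α₁ = u ∧ p.eval α₂ = 0 := by
  have hq0 : (Fintype.card B : ℕ) ≠ 0 := Fintype.card_ne_zero
  have hq1 : 1 < Fintype.card B := Fintype.one_lt_card
  have ht0 : 0 < t := ht ▸ Module.finrank_pos
  -- N(α₁) = 0
  have hN1 : N.eval α₁ = 0 := by
    rw [hN, eval_finset_sum]
    apply Finset.sum_eq_zero
    intro i _
    simp [zero_pow (pow_ne_zero i hq0)]
  -- N = (X - C α₁) * p
  have hfact : N = (X - C α₁) * p := by
    have h := Polynomial.modByMonic_add_div N (X - C α₁)
    rw [Polynomial.modByMonic_X_sub_C_eq_C_eval, hN1, map_zero, zero_add] at h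
    rw [hp, h]
  constructor
  · -- evaluate the derivative at α₁
    have hder := congrArg (fun r : F[X] => (Polynomial.derivative r).eval α₁) hfact
    simp only [derivative_mul, derivative_sub, derivative_X, derivative_C, sub_zero, one_mul,
      eval_add, eval_mul, eval_sub, eval_X, eval_C, sub_self, zero_mul, add_zero] at hder
    have hlhs : (Polynomial.derivative N).eval α₁ = u := by
      rw [hN, map_sum, eval_finset_sum]
      rw [Finset.sum_eq_single 0]
      · simp [Polynomial.derivative_pow]
      · intro i _ hi
        rw [Polynomial.derivative_pow]
        have h1 : 1 ≤ Fintype.card B ^ i - 1 := by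
          have := Nat.one_lt_pow hi hq1
          omega
        simp [zero_pow (by omega : Fintype.card B ^ i - 1 ≠ 0)]
      · intro h; exact absurd (Finset.mem_range.mpr ht0) h
    rw [hlhs] at hder
    exact hder.symm
  · -- evaluate at α₂
    have h2 := congrArg (fun r : F[X] => r.eval α₂) hfact
    simp only [eval_mul, eval_sub, eval_X, eval_C] at h2
    have hNa2 : N.eval α₂ = 0 := by
      rw [hN, eval_finset_sum]
      have : ∀ i ∈ Finset.range t, ((C u * (X - C α₁)) ^ Fintype.card B ^ i).eval α₂
          = (u * (α₂ - α₁)) ^ Fintype.card B ^ i := by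
        intro i _; simp
      rw [Finset.sum_congr rfl this]
      have := trace_pow_sum_aux B F (u * (α₂ - α₁))
      rw [ht] at this
      rw [← this]
      have : (u * (α₂ - α₁)) = -((α₁ - α₂) * u) := by ring
      rw [this, map_neg, hu, neg_zero, map_zero]
    rw [hNa2] at h2
    have hne : α₂ - α₁ ≠ 0 := sub_ne_zero.mpr (Ne.symm hα)
    rcases mul_eq_zero.mp h2.symm with h | h
    · exact absurd h hne
    · exact h
end

section
/- Let $F$ be a finite field with subfield $B$, $[F:B]=t>3$, $K=\ker(\mathrm{Tr}_{F/B})$, $\alpha_1,\alpha_2,\alpha_3\in F$ pairwise distinct, and $K_{1,2,3}=\{x:\mathrm{Tr}(\alpha_1x)=\mathrm{Tr}(\alpha_2x)=\mathrm{Tr}(\alpha_3x)\}$ with $\dim_B K_{1,2,3}=t-2$. Then there exist nonzero $\gamma_1,\gamma_2\in F$ such that $\frac{\gamma_2^{-1}}{\alpha_3-\alpha_1}\in K_{1,2,3}$ and $\gamma_1^{-1}\gamma_2\in\gamma_2(\alpha_1-\alpha_2)K_{1,2,3}\cap K$. -/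
/-- If `[F:B] = t > 3` and `dim_B K_{1,2,3} = t - 2`, then there exist nonzero
`γ₁, γ₂ ∈ F` with `γ₂⁻¹/(α₃-α₁) ∈ K_{1,2,3}` and
`γ₁⁻¹γ₂ ∈ γ₂(α₁-α₂)K_{1,2,3} ∩ K` where `K = ker(Tr_{F/B})`. -/
theorem stmt_18 (B F : Type*) [Field B] [Field F] [Algebra B F] [Finite F]
    [FiniteDimensional B F] (t : ℕ) (ht : Module.finrank B F = t) (h3 : 3 < t)
    (α₁ α₂ α₃ : F) (h12 : α₁ ≠ α₂) (h13 : α₁ ≠ α₃) (h23 : α₂ ≠ α₃)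
    (K123 : Submodule B F)
    (hK : (K123 : Set F) = {x : F | Algebra.trace B F (α₁ * x) = Algebra.trace B F (α₂ * x) ∧
      Algebra.trace B F (α₂ * x) = Algebra.trace B F (α₃ * x)})
    (hdim : Module.finrank B K123 = t - 2) :
    ∃ γ₁ γ₂ : F, γ₁ ≠ 0 ∧ γ₂ ≠ 0 ∧
      γ₂⁻¹ / (α₃ - α₁) ∈ K123 ∧
      γ₁⁻¹ * γ₂ ∈ ((fun x : F => γ₂ * (α₁ - α₂) * x) '' (K123 : Set F)) ∩
        {x : F | Algebra.trace B F x = 0} := by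
  have h31 : α₃ - α₁ ≠ 0 := sub_ne_zero.mpr (Ne.symm h13)
  have hsub : α₁ - α₂ ≠ 0 := sub_ne_zero.mpr h12
  -- get nonzero k ∈ K123
  have hKne : K123 ≠ ⊥ := by
    intro h
    rw [h, finrank_bot] at hdim
    omega
  obtain ⟨k, hk, hk0⟩ := Submodule.exists_mem_ne_zero_of_ne_bot hKne
  set γ₂ : F := ((α₃ - α₁) * k)⁻¹ with hγ₂
  have hγ₂0 : γ₂ ≠ 0 := inv_ne_zero (mul_ne_zero h31 hk0)
  have hmem2 : γ₂⁻¹ / (α₃ - α₁) ∈ K123 := by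
    have : γ₂⁻¹ / (α₃ - α₁) = k := by
      rw [hγ₂, inv_inv]
      field_simp
    rw [this]; exact hk
  -- linear map x ↦ Tr(γ₂(α₁-α₂)x) on K123
  set c : F := γ₂ * (α₁ - α₂) with hc
  let f : K123 →ₗ[B] B :=
    (Algebra.trace B F).comp ((LinearMap.mulLeft B c).comp K123.subtype)
  have hker : LinearMap.ker f ≠ ⊥ := by
    intro h
    have h1 := LinearMap.finrank_range_add_finrank_ker f
    rw [h, finrank_bot, add_zero] at h1
    have h2 : Module.finrank B (LinearMap.range f) ≤ Module.finrank B B :=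
      Submodule.finrank_le _
    rw [Module.finrank_self] at h2
    rw [hdim] at h1
    omega
  obtain ⟨x, hxker, hx0⟩ := Submodule.exists_mem_ne_zero_of_ne_bot hker
  have hxval0 : (x : F) ≠ 0 := fun h => hx0 (Subtype.ext h)
  set γ₁ : F := ((α₁ - α₂) * (x : F))⁻¹ with hγ₁
  have hγ₁0 : γ₁ ≠ 0 := inv_ne_zero (mul_ne_zero hsub hxval0)
  refine ⟨γ₁, γ₂, hγ₁0, hγ₂0, hmem2, ?_, ?_⟩
  · exact ⟨(x : F), x.2, by rw [hγ₁, inv_inv]; ring⟩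
  · have : γ₁⁻¹ * γ₂ = c * (x : F) := by rw [hγ₁, inv_inv, hc]; ring
    rw [Set.mem_setOf_eq, this]
    have := LinearMap.mem_ker.mp hxker
    simpa [f] using this
end
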